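/- arXiv:2304.14557 — 2 statements merged into one kernel-verified Lean document; each statement's English description precedes it below -/
import Mathlib

section
/- A collection of subtrees of a tree has a common node if and only if every pair of subtrees in the collection has a common node (Helly property for subtrees of a tree). -/
/-!
Root the tree at an arbitrary vertex `r`. Every subtree `S` has a gate: the vertex of `S`
nearest to `r`, which lies on the path from `r` to every vertex of `S`. Take the subtree whose
gate `g` is farthest from `r`. Any other subtree `S'` meets it in some `x`; on the path from `r`
to `x` the gate of `S'` comes no later than `g`, so `g` lies on the path from the gate of `S'`
to `x`, and that path stays inside `S'`.
-/

namespace SimpleGraph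

variable {V : Type*} {G : SimpleGraph V} {u v w : V}

theorem Walk.IsPath.append {p : G.Walk u v} {q : G.Walk v w} (hp : p.IsPath) (hq : q.IsPath)
    (h : ∀ x ∈ p.support, x ∈ q.support → x = v) : (p.append q).IsPath := by
  rw [Walk.isPath_def, Walk.support_append, List.nodup_append]
  refine ⟨hp.support_nodup, hq.support_nodup.sublist q.support.tail_sublist, ?_⟩
  rintro x hx _ hy rfl
  have hv : v ∉ q.support.tail := by
    have := hq.support_nodup
    rw [← q.cons_tail_support] at this
    exact (List.nodup_cons.mp this).1
  exact hv (h x hx (List.mem_of_mem_tail hy) ▸ hy)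

namespace IsAcyclic

theorem eq_of_isPath (hG : G.IsAcyclic) {p q : G.Walk u v} (hp : p.IsPath) (hq : q.IsPath) :
    p = q :=
  congrArg Subtype.val <| (hG.subsingleton_path u v).elim ⟨p, hp⟩ ⟨q, hq⟩

theorem length_eq_dist (hG : G.IsAcyclic) {p : G.Walk u v} (hp : p.IsPath) :
    p.length = G.dist u v := by
  obtain ⟨q, hq, hql⟩ := p.reachable.exists_path_of_dist
  rwa [hG.eq_of_isPath hp hq]

theorem dist_add_dist_of_mem_support (hG : G.IsAcyclic) {p : G.Walk u v} (hp : p.IsPath)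
    (hw : w ∈ p.support) : G.dist u w + G.dist w v = G.dist u v := by
  obtain ⟨q, r, hq, hr, rfl⟩ := hp.mem_support_iff_exists_append.mp hw
  rw [← hG.length_eq_dist hq, ← hG.length_eq_dist hr, ← hG.length_eq_dist hp,
    Walk.length_append]

theorem support_subset_of_preconnected_induce (hG : G.IsAcyclic) {S : Set V}
    (hS : (G.induce S).Preconnected) {p : G.Walk u v} (hp : p.IsPath) (hu : u ∈ S)
    (hv : v ∈ S) : ∀ x ∈ p.support, x ∈ S := by
  classical
  obtain ⟨q⟩ := hS ⟨u, hu⟩ ⟨v, hv⟩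
  intro x hx
  rw [hG.eq_of_isPath hp (q.map (Embedding.induce S).toHom).bypass_isPath] at hx
  obtain ⟨y, -, rfl⟩ := List.mem_map.mp <| by
    simpa only [Walk.support_map] using q.map _ |>.support_bypass_subset_support hx
  exact y.2

theorem mem_support_dropUntil_of_dist_le [DecidableEq V] (hG : G.IsAcyclic) {r : V}
    {p : G.Walk r w} (hp : p.IsPath) (hu : u ∈ p.support) (hv : v ∈ p.support)
    (huv : G.dist r u ≤ G.dist r v) :
    v ∈ (p.dropUntil u hu).support := by
  rw [← p.take_spec hu, Walk.mem_support_append_iff] at hv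
  rcases hv with hv | hv
  · have hsplit := hG.dist_add_dist_of_mem_support (hp.takeUntil hu) hv
    obtain rfl : v = u := (Reachable.dist_eq_zero_iff ⟨(p.takeUntil u hu).dropUntil v hv⟩).mp
      (by omega)
    exact Walk.start_mem_support _
  · exact hv

end IsAcyclic

theorem IsTree.exists_gate (hG : G.IsTree) {S : Set V} (hS : (G.induce S).Connected) (r : V) :
    ∃ g ∈ S, ∀ x ∈ S, ∀ p : G.Walk r x, p.IsPath → g ∈ p.support := by
  obtain ⟨⟨x₀, hx₀⟩⟩ := hS.nonempty
  obtain ⟨g, hgS, hgmin⟩ :=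
    exists_minimalFor_of_wellFoundedLT (· ∈ S) (G.dist r) ⟨x₀, hx₀⟩
  refine ⟨g, hgS, fun x hx p hp => ?_⟩
  obtain ⟨q, hq, -⟩ := (hG.connected r g).exists_path_of_dist
  obtain ⟨s, hs, -⟩ := (hG.connected g x).exists_path_of_dist
  have hsS := hG.isAcyclic.support_subset_of_preconnected_induce hS.preconnected hs hgS hx
  -- a vertex shared by `q` and `s` lies in `S` and between `r` and `g`, so it is `g`
  have hqs : (q.append s).IsPath := hq.append hs fun z hzq hzs => by
    have hsplit := hG.isAcyclic.dist_add_dist_of_mem_support hq hzq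
    have hgz := hgmin (hsS z hzs) (by omega)
    exact (hG.connected z g).dist_eq_zero_iff.mp (by omega)
  rw [hG.isAcyclic.eq_of_isPath hp hqs, Walk.mem_support_append_iff]
  exact Or.inr s.start_mem_support

end SimpleGraph

theorem helly_subtrees_general {ι : Type*} (T : SimpleGraph ι) (hT : T.IsTree)
    (k : ℕ) (S : Fin k → Set ι)
    (hconn : ∀ i, (T.induce (S i)).Connected) :
    (∃ t : ι, ∀ i, t ∈ S i) ↔ ∀ i j : Fin k, (S i ∩ S j).Nonempty := by
  classical
  refine ⟨fun ⟨t, ht⟩ i j => ⟨t, ht i, ht j⟩, fun h => ?_⟩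
  obtain ⟨r⟩ := hT.connected.nonempty
  rcases isEmpty_or_nonempty (Fin k) with hk | hk
  · exact ⟨r, isEmptyElim⟩
  choose g hgS hgate using fun i => hT.exists_gate (hconn i) r
  obtain ⟨i₀, hi₀⟩ := Finite.exists_max fun i => T.dist r (g i)
  refine ⟨g i₀, fun j => ?_⟩
  obtain ⟨x, hx₀, hxj⟩ := h i₀ j
  obtain ⟨p, hp, -⟩ := (hT.connected r x).exists_path_of_dist
  have hj := hgate j x hxj p hp
  have hi₀j :=
    hT.isAcyclic.mem_support_dropUntil_of_dist_le hp hj (hgate i₀ x hx₀ p hp) (hi₀ j)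
  exact hT.isAcyclic.support_subset_of_preconnected_induce (hconn j).preconnected
    (hp.dropUntil hj) (hgS j) hxj _ hi₀j

/-- Helly property for subtrees of a tree: a finite family of subtrees of a tree
has a common node if and only if every pair of subtrees has a common node. -/
theorem helly_subtrees {ι : Type*} [Fintype ι] (T : SimpleGraph ι) (hT : T.IsTree)
    (k : ℕ) (S : Fin k → Set ι)
    (hconn : ∀ i, (T.induce (S i)).Connected) :
    (∃ t : ι, ∀ i, t ∈ S i) ↔ ∀ i j : Fin k, (S i ∩ S j).Nonempty :=
  helly_subtrees_general T hT k S hconn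
end

section
/- For the complete bipartite graph K_{2,ℓ} (as a hypergraph whose hyperedges are its edges), there is an embedding of the (2ℓ−1)-clique into K_{2,ℓ} with weak edge depth ℓ; hence emb(K_{2,ℓ}) ≥ 2 − 1/ℓ. -/
open Finset

structure Hypergraph' (V : Type*) [DecidableEq V] [Fintype V] where
  edges : Finset (Finset V)

namespace Hypergraph'

variable {V : Type*} [DecidableEq V] [Fintype V]

/-- Two vertex sets touch in `H`: they intersect, or some hyperedge meets both. -/
def touch (H : Hypergraph' V) (S T : Finset V) : Prop :=
  (S ∩ T).Nonempty ∨ ∃ e ∈ H.edges, (e ∩ S).Nonempty ∧ (e ∩ T).Nonempty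

/-- `S` induces a connected subhypergraph of `H`. -/
def connSet (H : Hypergraph' V) (S : Finset V) : Prop :=
  ∀ a ∈ S, ∀ b ∈ S,
    Relation.ReflTransGen (fun x y => x ∈ S ∧ y ∈ S ∧ ∃ e ∈ H.edges, x ∈ e ∧ y ∈ e) a b

/-- An embedding of the `k`-clique into the hypergraph `H`. -/
def IsCliqueEmb (H : Hypergraph' V) (k : ℕ) (ψ : Fin k → Finset V) : Prop :=
  (∀ i, (ψ i).Nonempty) ∧ (∀ i, H.connSet (ψ i)) ∧
    ∀ i j : Fin k, i ≠ j → H.touch (ψ i) (ψ j)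

/-- The weak edge depth of an embedding: the max over hyperedges `e` of the number
of clique vertices whose image meets `e`. -/
def wedOf (H : Hypergraph' V) {k : ℕ} (ψ : Fin k → Finset V) : ℕ :=
  H.edges.sup fun e => (Finset.univ.filter fun i : Fin k => ((ψ i) ∩ e).Nonempty).card

/-- `wed (C_k ↦ H)`: the minimum weak edge depth over embeddings of the `k`-clique. -/
noncomputable def wed (H : Hypergraph' V) (k : ℕ) : ℕ :=
  sInf {w | ∃ ψ : Fin k → Finset V, H.IsCliqueEmb k ψ ∧ H.wedOf ψ ≤ w}

end Hypergraph'

/-- A tree decomposition of a hypergraph. -/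
structure IsTreeDecomp {V : Type*} [DecidableEq V] [Fintype V] {ι : Type*}
    (H : Hypergraph' V) (T : SimpleGraph ι) (χ : ι → Finset V) : Prop where
  tree : T.IsTree
  covers : ∀ e ∈ H.edges, ∃ t, e ⊆ χ t
  conn : ∀ v : V, (T.induce {t | v ∈ χ t}).Connected

/-- The clique embedding power of a hypergraph. -/
noncomputable def embPower {V : Type*} [DecidableEq V] [Fintype V] (H : Hypergraph' V) : ℝ :=
  sSup {x : ℝ | ∃ k : ℕ, 3 ≤ k ∧ x = (k : ℝ) / (H.wed k : ℝ)}

/-- The complete bipartite graph `K_{2,ℓ}` as a hypergraph: vertices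
`Fin 2 ⊕ Fin ℓ`, hyperedges the edges `{x_a, y_i}`. -/
def K2l (ℓ : ℕ) : Hypergraph' (Fin 2 ⊕ Fin ℓ) :=
  ⟨Finset.univ.image fun p : Fin 2 × Fin ℓ =>
    ({Sum.inl p.1, Sum.inr p.2} : Finset (Fin 2 ⊕ Fin ℓ))⟩

/-!
The `2ℓ − 2` images `{x_a, y_i}` (`a ∈ {1, 2}`, `i ∈ [ℓ − 1]`) together with `{y_ℓ}` pairwise
touch, since every image contains some `y` and all images but one contain some `x`. An edge
`{x_a, y_t}` is met by the `ℓ − 1` images through `x_a` and by at most one further image, so the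
weak edge depth is `ℓ`. For the bound on `emb`, the ratios `k / wed k` are at most the number of
edges, because each clique vertex meets some edge and each edge is met by at most `wed k` of
them; so the supremum defining `emb` is over a bounded set and dominates `(2ℓ − 1) / ℓ`.
-/

namespace Hypergraph'

variable {V : Type*} [DecidableEq V] [Fintype V] {H : Hypergraph' V}

theorem touch_symm {S T : Finset V} (h : H.touch S T) : H.touch T S := by
  rcases h with h | ⟨e, he, hS, hT⟩
  · exact Or.inl (inter_comm S T ▸ h)
  · exact Or.inr ⟨e, he, hT, hS⟩

theorem connSet_of_subset {S e : Finset V} (he : e ∈ H.edges) (hS : S ⊆ e) : H.connSet S :=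
  fun _ ha _ hb => .single ⟨ha, hb, e, he, hS ha, hS hb⟩

theorem isCliqueEmb_comp {ι : Type*} {k : ℕ} {f : Fin k → ι} (hf : f.Injective)
    {ψ : ι → Finset V} (hne : ∀ i, (ψ i).Nonempty) (hconn : ∀ i, H.connSet (ψ i))
    (htouch : Pairwise fun i j => H.touch (ψ i) (ψ j)) : H.IsCliqueEmb k (ψ ∘ f) :=
  ⟨fun _ => hne _, fun _ => hconn _, fun _ _ hij => htouch (hf.ne hij)⟩

theorem wedOf_comp_equiv_le {ι : Type*} [Fintype ι] {k w : ℕ} (f : Fin k ≃ ι)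
    {ψ : ι → Finset V} (h : ∀ e ∈ H.edges, #{i | (ψ i ∩ e).Nonempty} ≤ w) :
    H.wedOf (ψ ∘ f) ≤ w :=
  Finset.sup_le fun e he => (card_equiv f (by simp)).trans_le (h e he)

theorem card_le_card_edges_mul_wedOf (hcover : ∀ v, ∃ e ∈ H.edges, v ∈ e) {k : ℕ}
    {ψ : Fin k → Finset V} (hne : ∀ i, (ψ i).Nonempty) : k ≤ #H.edges * H.wedOf ψ :=
  calc k = #(univ : Finset (Fin k)) := (card_fin k).symm
    _ ≤ #(H.edges.biUnion fun e => {i | (ψ i ∩ e).Nonempty}) := card_le_card fun i _ => by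
        obtain ⟨v, hv⟩ := hne i
        obtain ⟨e, he, hve⟩ := hcover v
        exact mem_biUnion.2 ⟨e, he, mem_filter.2 ⟨mem_univ i, v, mem_inter.2 ⟨hv, hve⟩⟩⟩
    _ ≤ #H.edges * H.wedOf ψ := card_biUnion_le_card_mul _ _ _ fun _ he =>
        le_sup (f := fun e => #{i | (ψ i ∩ e).Nonempty}) he

theorem wed_le {k w : ℕ} {ψ : Fin k → Finset V} (hψ : H.IsCliqueEmb k ψ)
    (hw : H.wedOf ψ ≤ w) : H.wed k ≤ w :=
  Nat.sInf_le ⟨ψ, hψ, hw⟩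

theorem card_le_card_edges_mul_wed (hcover : ∀ v, ∃ e ∈ H.edges, v ∈ e) {k : ℕ}
    {ψ : Fin k → Finset V} (hψ : H.IsCliqueEmb k ψ) : k ≤ #H.edges * H.wed k := by
  obtain ⟨ψ₀, hψ₀, hw₀⟩ : H.wed k ∈ {w | ∃ ψ, H.IsCliqueEmb k ψ ∧ H.wedOf ψ ≤ w} :=
    Nat.sInf_mem ⟨_, ψ, hψ, le_rfl⟩
  exact (card_le_card_edges_mul_wedOf hcover hψ₀.1).trans (Nat.mul_le_mul_left _ hw₀)

theorem wed_eq_zero_of_forall_not_isCliqueEmb {k : ℕ}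
    (h : ∀ ψ : Fin k → Finset V, ¬H.IsCliqueEmb k ψ) : H.wed k = 0 :=
  Nat.sInf_eq_zero.2 <| .inr <| Set.eq_empty_of_forall_notMem fun _ ⟨ψ, hψ, _⟩ => h ψ hψ

-- `wed k = 0` when `C_k` does not embed, and then the ratio is `k / 0 = 0`.
theorem div_wed_le_card_edges (hcover : ∀ v, ∃ e ∈ H.edges, v ∈ e) (k : ℕ) :
    (k : ℝ) / H.wed k ≤ #H.edges := by
  by_cases h : ∃ ψ, H.IsCliqueEmb k ψ
  · obtain ⟨ψ, hψ⟩ := h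
    exact div_le_of_le_mul₀ (by positivity) (by positivity)
      (by exact_mod_cast card_le_card_edges_mul_wed hcover hψ)
  · simp [wed_eq_zero_of_forall_not_isCliqueEmb fun ψ hψ => h ⟨ψ, hψ⟩]

theorem div_le_embPower (hcover : ∀ v, ∃ e ∈ H.edges, v ∈ e) {k w : ℕ} (hk : 3 ≤ k)
    {ψ : Fin k → Finset V} (hψ : H.IsCliqueEmb k ψ) (hw : H.wedOf ψ ≤ w) :
    (k : ℝ) / w ≤ embPower H := by
  have hwed : 0 < H.wed k := Nat.pos_of_ne_zero fun h0 => by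
    have := card_le_card_edges_mul_wed hcover hψ
    rw [h0, mul_zero] at this
    omega
  calc (k : ℝ) / w ≤ k / H.wed k :=
        div_le_div_of_nonneg_left (by positivity) (by exact_mod_cast hwed)
          (by exact_mod_cast wed_le hψ hw)
    _ ≤ embPower H :=
        le_csSup ⟨#H.edges, by rintro _ ⟨j, -, rfl⟩; exact div_wed_le_card_edges hcover j⟩
          ⟨k, hk, rfl⟩

end Hypergraph'

namespace K2l

open Hypergraph'

theorem pair_mem_edges {ℓ : ℕ} (a : Fin 2) (i : Fin ℓ) :
    {Sum.inl a, Sum.inr i} ∈ (K2l ℓ).edges :=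
  mem_image_of_mem _ (mem_univ (a, i))

theorem exists_edge_mem {ℓ : ℕ} (hℓ : 0 < ℓ) (v : Fin 2 ⊕ Fin ℓ) :
    ∃ e ∈ (K2l ℓ).edges, v ∈ e := by
  rcases v with a | i
  · exact ⟨_, pair_mem_edges a ⟨0, hℓ⟩, by simp⟩
  · exact ⟨_, pair_mem_edges 0 i, by simp⟩

theorem touch_of_inl_mem_of_inr_mem {ℓ : ℕ} {S T : Finset (Fin 2 ⊕ Fin ℓ)} {a : Fin 2}
    {i : Fin ℓ} (hS : Sum.inl a ∈ S) (hT : Sum.inr i ∈ T) : (K2l ℓ).touch S T :=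
  .inr ⟨_, pair_mem_edges a i, ⟨_, mem_inter.2 ⟨by simp, hS⟩⟩, ⟨_, mem_inter.2 ⟨by simp, hT⟩⟩⟩

/-- The embedding `ψ` of the paper for `ℓ = m + 1`: `some (a, i)` is the clique vertex mapped
onto `{x_a, y_i}`, and `none` the one mapped onto `{y_ℓ}`. -/
def cliqueImage (m : ℕ) : Option (Fin 2 × Fin m) → Finset (Fin 2 ⊕ Fin (m + 1))
  | some (a, i) => {Sum.inl a, Sum.inr i.castSucc}
  | none => {Sum.inr (Fin.last m)}

variable {m : ℕ}

theorem cliqueImage_nonempty (p : Option (Fin 2 × Fin m)) : (cliqueImage m p).Nonempty := by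
  rcases p with _ | ⟨a, i⟩ <;> simp [cliqueImage]

theorem connSet_cliqueImage (p : Option (Fin 2 × Fin m)) :
    (K2l (m + 1)).connSet (cliqueImage m p) := by
  rcases p with _ | ⟨a, i⟩
  · exact connSet_of_subset (pair_mem_edges 0 (Fin.last m)) (by simp [cliqueImage])
  · exact connSet_of_subset (pair_mem_edges a i.castSucc) subset_rfl

theorem pairwise_touch_cliqueImage :
    Pairwise fun p q => (K2l (m + 1)).touch (cliqueImage m p) (cliqueImage m q) := by
  rintro (_ | ⟨a, i⟩) (_ | ⟨b, j⟩) hpq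
  · exact absurd rfl hpq
  · exact touch_symm (touch_of_inl_mem_of_inr_mem (a := b) (by simp [cliqueImage])
      (by simp [cliqueImage] : Sum.inr (Fin.last m) ∈ _))
  · exact touch_of_inl_mem_of_inr_mem (a := a) (by simp [cliqueImage])
      (by simp [cliqueImage] : Sum.inr (Fin.last m) ∈ _)
  · exact touch_of_inl_mem_of_inr_mem (a := a) (by simp [cliqueImage])
      (by simp [cliqueImage] : Sum.inr j.castSucc ∈ _)

-- `o` is the clique vertex through the other `x` and `y_t`, or the one mapped onto `{y_ℓ}`.
theorem card_filter_cliqueImage_inter_le (a : Fin 2) (t : Fin (m + 1)) :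
    #{p | (cliqueImage m p ∩ {Sum.inl a, Sum.inr t}).Nonempty} ≤ m + 1 := by
  suffices ∃ o, ({p | (cliqueImage m p ∩ {Sum.inl a, Sum.inr t}).Nonempty} : Finset _) ⊆
      insert o (univ.image fun i : Fin m => some (a, i)) by
    obtain ⟨o, ho⟩ := this
    calc _ ≤ _ := card_le_card ho
      _ ≤ #(univ.image fun i : Fin m => some (a, i)) + 1 := card_insert_le _ _
      _ ≤ m + 1 := by grw [card_image_le, card_univ, Fintype.card_fin]
  induction t using Fin.lastCases with
  | last =>
    refine ⟨none, fun p hp => ?_⟩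
    rcases p with _ | ⟨b, i⟩ <;> simp [cliqueImage, Finset.Nonempty] at hp ⊢
    exact hp.resolve_right (Fin.castSucc_ne_last i).symm
  | cast j =>
    refine ⟨some (a.rev, j), fun p hp => ?_⟩
    rcases p with _ | ⟨b, i⟩ <;> simp [cliqueImage, Finset.Nonempty] at hp ⊢
    rcases hp with hab | rfl
    · exact .inr hab
    · by_cases hab : a = b
      · exact .inr hab
      · exact .inl ⟨by revert a b; decide, rfl⟩

theorem exists_isCliqueEmb_wedOf_le {ℓ : ℕ} (hℓ : 0 < ℓ) :
    ∃ ψ : Fin (2 * ℓ - 1) → Finset (Fin 2 ⊕ Fin ℓ),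
      (K2l ℓ).IsCliqueEmb (2 * ℓ - 1) ψ ∧ (K2l ℓ).wedOf ψ ≤ ℓ := by
  obtain ⟨m, rfl⟩ : ∃ m, ℓ = m + 1 := ⟨ℓ - 1, by omega⟩
  let f : Fin (2 * (m + 1) - 1) ≃ Option (Fin 2 × Fin m) :=
    Fintype.equivOfCardEq (by simp; omega)
  refine ⟨cliqueImage m ∘ f, isCliqueEmb_comp f.injective cliqueImage_nonempty
    connSet_cliqueImage pairwise_touch_cliqueImage, wedOf_comp_equiv_le f ?_⟩
  rintro _ he
  obtain ⟨⟨a, t⟩, -, rfl⟩ := mem_image.1 he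
  exact card_filter_cliqueImage_inter_le a t

end K2l

/-- There is an embedding of the `(2ℓ−1)`-clique into `K_{2,ℓ}` with weak edge
depth `ℓ`; hence `emb(K_{2,ℓ}) ≥ 2 − 1/ℓ`. -/
theorem K2l_emb_lower_bound (ℓ : ℕ) (hℓ : 2 ≤ ℓ) :
    (∃ ψ : Fin (2 * ℓ - 1) → Finset (Fin 2 ⊕ Fin ℓ),
      (K2l ℓ).IsCliqueEmb (2 * ℓ - 1) ψ ∧ (K2l ℓ).wedOf ψ ≤ ℓ) ∧
    (2 : ℝ) - 1 / (ℓ : ℝ) ≤ embPower (K2l ℓ) := by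
  obtain ⟨ψ, hψ, hw⟩ := K2l.exists_isCliqueEmb_wedOf_le (by omega : 0 < ℓ)
  refine ⟨⟨ψ, hψ, hw⟩, ?_⟩
  have hk : ((2 * ℓ - 1 : ℕ) : ℝ) = 2 * ℓ - 1 := by
    rw [Nat.cast_sub (by omega), Nat.cast_mul]; norm_num
  calc (2 : ℝ) - 1 / ℓ = ((2 * ℓ - 1 : ℕ) : ℝ) / ℓ := by
        rw [hk]; field_simp
    _ ≤ embPower (K2l ℓ) :=
        Hypergraph'.div_le_embPower (K2l.exists_edge_mem (by omega)) (by omega) hψ hw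
end
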